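/- Consider the MaxCut feasible set: $\mathcal{M}_p = \{V \in \mathbb{R}^{n \times p} : \mathrm{diag}(VV^T) = \mathbf{1}\}$ (each row of $V$ has unit norm), with $n \geq \frac{p(p+1)}{2} + p$. Let $V \in \mathcal{M}_p$ have rows: $V_{i,:} = e_i$ and $V_{p+i,:} = -e_i$ for $i \leq p$, $V_{2p+\phi(i,j),:} = (e_i + e_j)/\sqrt{2}$ for $1 \leq i < j \leq p$ (with $\phi$ a bijection onto $\{1,\dots,p(p-1)/2\}$), and arbitrary unit rows after. Let $U_0 = \mathbf{1}_{n \times 1}$. If $\dot{V} = U_0 R + VA'$ for some $R \in \mathbb{R}^{1 \times p}$, $A' \in \mathbb{R}^{p \times p}$, and $\mathrm{diag}(V\dot{V}^T + \dot{V}V^T) = 0$, then $R = 0$ and $A'$ is antisymmetric. -/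

import Mathlib

/-!
Write `r = R₀` and `v` for a row of `V`. The `k`-th diagonal entry of `V V̇ᵀ + V̇ Vᵀ` is
`2 ⟨v, r + v A'⟩`, a quadratic polynomial in `v`. Evaluating it at `eᵢ` and `-eᵢ` gives
`rᵢ ± A'ᵢᵢ = 0`, so `r = 0` and `diag A' = 0`; at `(eᵢ + eⱼ)/√2` it then reduces to
`(A'ᵢⱼ + A'ⱼᵢ)/2 = 0`.
-/

open Matrix

section Tangency

variable {ι : Type*} [Fintype ι] [DecidableEq ι] (r : ι → ℝ) (A : Matrix ι ι ℝ)

lemma single_dotProduct_add_single_vecMul (i : ι) :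
    Pi.single i 1 ⬝ᵥ (r + Pi.single i 1 ᵥ* A) = r i + A i i := by
  simp

lemma neg_single_dotProduct_add_neg_single_vecMul (i : ι) :
    (-Pi.single i 1) ⬝ᵥ (r + (-Pi.single i 1) ᵥ* A) = -r i + A i i := by
  simp [neg_vecMul, neg_dotProduct]

lemma pair_dotProduct_add_pair_vecMul (c : ℝ) (i j : ι) :
    (c • (Pi.single i 1 + Pi.single j 1)) ⬝ᵥ (r + (c • (Pi.single i 1 + Pi.single j 1)) ᵥ* A) =
      c * (r i + r j) + c ^ 2 * (A i i + A i j + A j i + A j j) := by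
  simp only [smul_add, add_vecMul, smul_vecMul, single_vecMul, one_smul, dotProduct_add,
    add_dotProduct, smul_dotProduct, single_dotProduct, one_mul, smul_eq_mul, dotProduct_smul,
    row_apply]
  ring

theorem eq_zero_and_transpose_eq_neg_of_dotProduct_add_vecMul [LinearOrder ι] {c : ℝ}
    (hc : c ≠ 0)
    (hpos : ∀ i, Pi.single i 1 ⬝ᵥ (r + Pi.single i 1 ᵥ* A) = 0)
    (hneg : ∀ i, (-Pi.single i 1) ⬝ᵥ (r + (-Pi.single i 1) ᵥ* A) = 0)
    (hpair : ∀ i j, i < j →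
      (c • (Pi.single i 1 + Pi.single j 1)) ⬝ᵥ
        (r + (c • (Pi.single i 1 + Pi.single j 1)) ᵥ* A) = 0) :
    r = 0 ∧ Aᵀ = -A := by
  have hr : ∀ i, r i = 0 := fun i => by
    linarith [single_dotProduct_add_single_vecMul r A i ▸ hpos i,
      neg_single_dotProduct_add_neg_single_vecMul r A i ▸ hneg i]
  have hAii : ∀ i, A i i = 0 := fun i => by
    linarith [single_dotProduct_add_single_vecMul r A i ▸ hpos i,
      neg_single_dotProduct_add_neg_single_vecMul r A i ▸ hneg i]
  have hAij : ∀ i j, i < j → A i j + A j i = 0 := fun i j hij => by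
    have h := pair_dotProduct_add_pair_vecMul r A c i j ▸ hpair i j hij
    rw [hr, hr, hAii, hAii] at h
    simpa [hc] using h
  refine ⟨funext hr, ?_⟩
  ext i j
  simp only [transpose_apply, Matrix.neg_apply]
  rcases lt_trichotomy i j with h | rfl | h
  · linarith [hAij i j h]
  · simp [hAii]
  · linarith [hAij j i h]

end Tangency

lemma mul_transpose_add_mul_transpose_apply_self {m ι : Type*} [Fintype ι]
    (V W : Matrix m ι ℝ) (k : m) :
    (V * Wᵀ + W * Vᵀ) k k = 2 * (V k ⬝ᵥ W k) := by
  simp only [Matrix.add_apply, mul_apply', transpose_apply]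
  rw [dotProduct_comm (W k)]
  ring

lemma ones_mul_add_mul_apply {m ι κ : Type*} [Fintype κ] (R : Matrix (Fin 1) ι ℝ)
    (V : Matrix m κ ℝ) (A : Matrix κ ι ℝ) (k : m) :
    (of (fun (_ : m) (_ : Fin 1) => (1 : ℝ)) * R + V * A) k = R 0 + V k ᵥ* A := by
  ext j
  simp [mul_apply, vecMul, dotProduct]

theorem stmt13_general {n p : ℕ}
    (V : Matrix (Fin n) (Fin p) ℝ)
    (ρ : (Fin p ⊕ Fin p ⊕ {q : Fin p × Fin p // q.1 < q.2}) → Fin n)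
    (h1 : ∀ i : Fin p, V (ρ (Sum.inl i)) = Pi.single i 1)
    (h2 : ∀ i : Fin p, V (ρ (Sum.inr (Sum.inl i))) = -Pi.single i 1)
    (h3 : ∀ q : {q : Fin p × Fin p // q.1 < q.2},
      V (ρ (Sum.inr (Sum.inr q))) =
        (Real.sqrt 2)⁻¹ • (Pi.single q.1.1 1 + Pi.single q.1.2 1))
    (R : Matrix (Fin 1) (Fin p) ℝ) (A' : Matrix (Fin p) (Fin p) ℝ)
    (Vdot : Matrix (Fin n) (Fin p) ℝ)
    (hVdot : Vdot = (Matrix.of fun (_ : Fin n) (_ : Fin 1) => (1 : ℝ)) * R + V * A')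
    (hdiag : ∀ k : Fin n, (V * Vdotᵀ + Vdot * Vᵀ) k k = 0) :
    R = 0 ∧ A'ᵀ = -A' := by
  have hrow : ∀ k, V k ⬝ᵥ (R 0 + V k ᵥ* A') = 0 := fun k => by
    have h := hdiag k
    rw [mul_transpose_add_mul_transpose_apply_self, hVdot, ones_mul_add_mul_apply] at h
    linarith
  obtain ⟨hR, hA⟩ := eq_zero_and_transpose_eq_neg_of_dotProduct_add_vecMul (R 0) A'
    (inv_ne_zero (by positivity : Real.sqrt 2 ≠ 0))
    (fun i => h1 i ▸ hrow (ρ (.inl i)))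
    (fun i => h2 i ▸ hrow (ρ (.inr (.inl i))))
    (fun i j hij => h3 ⟨(i, j), hij⟩ ▸ hrow (ρ (.inr (.inr ⟨(i, j), hij⟩))))
  refine ⟨?_, hA⟩
  ext a j
  rw [Subsingleton.elim a 0]
  exact congrFun hR j

/-- MaxCut: for the special feasible point `V` (with rows `e_i`, `-e_i`,
`(e_i+e_j)/√2` at distinct positions, and arbitrary unit-norm rows elsewhere),
any matrix `V̇ = U0 R + V A'` (with `U0` the all-ones column) satisfying the
tangency condition `diag(V V̇ᵀ + V̇ Vᵀ) = 0` must have `R = 0` and `A'`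
antisymmetric. -/
theorem stmt13 {n p : ℕ} (hn : p * (p + 1) / 2 + p ≤ n)
    (V : Matrix (Fin n) (Fin p) ℝ)
    (ρ : (Fin p ⊕ Fin p ⊕ {q : Fin p × Fin p // q.1 < q.2}) → Fin n)
    (hρ : Function.Injective ρ)
    (h1 : ∀ i : Fin p, V (ρ (Sum.inl i)) = Pi.single i 1)
    (h2 : ∀ i : Fin p, V (ρ (Sum.inr (Sum.inl i))) = -Pi.single i 1)
    (h3 : ∀ q : {q : Fin p × Fin p // q.1 < q.2},
      V (ρ (Sum.inr (Sum.inr q))) =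
        (Real.sqrt 2)⁻¹ • (Pi.single q.1.1 1 + Pi.single q.1.2 1))
    (hunit : ∀ k : Fin n, ∑ j, V k j ^ 2 = 1)
    (R : Matrix (Fin 1) (Fin p) ℝ) (A' : Matrix (Fin p) (Fin p) ℝ)
    (Vdot : Matrix (Fin n) (Fin p) ℝ)
    (hVdot : Vdot = (Matrix.of fun (_ : Fin n) (_ : Fin 1) => (1 : ℝ)) * R + V * A')
    (hdiag : ∀ k : Fin n, (V * Vdotᵀ + Vdot * Vᵀ) k k = 0) :
    R = 0 ∧ A'ᵀ = -A' :=
  stmt13_general V ρ h1 h2 h3 R A' Vdot hVdot hdiag
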